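/- arXiv:1304.0797 — 2 statements merged into one kernel-verified Lean document; each statement's English description precedes it below -/
import Mathlib

section
/- For every α ∈ (0,2) and every k > 0, ∫_0^∞ sin(kv)·sin(v)·v^{−1−α} dv = (π/4)·(|k+1|^α − |k−1|^α) / (Γ(1+α)·sin(πα/2)). In particular this integral is O(k^{α−1}) as k → ∞. -/
/-!
Since `2 sin (k v) sin v = (1 - cos ((k + 1) v)) - (1 - cos ((k - 1) v))`, everything reduces to
`J b = ∫₀^∞ (1 - cos (b v)) v^(-1-α) dv`, and the substitution `v ↦ v / |b|` gives
`J b = |b|^α J 1`. To compute `J 1`, insert `Γ(1+α) v^(-1-α) = ∫₀^∞ t^α e^(-v t) dt` and swap the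
integrals (Tonelli); the Laplace transform `∫₀^∞ (1 - cos v) e^(-t v) dv = 1 / (t (t² + 1))` leaves
`∫₀^∞ t^(α-1) / (1 + t²) dt`. The same trick with `1 / (1 + t²) = ∫₀^∞ e^(-(1+t²) u) du` turns this
into `Γ(α/2) Γ(1-α/2) / 2 = π / (2 sin (π α / 2))` by the reflection formula.

For the bound, `(k+1)^α - (k-1)^α = k^α ((1 + 1/k)^α - (1 - 1/k)^α)`, and the bracket is `O(1/k)`
because `h ↦ (1 + h)^α - (1 - h)^α` is differentiable and vanishes at `0`.
-/

open MeasureTheory Real Set Filter Asymptotics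

open scoped Topology

section Tonelli

variable {X Y : Type*} [MeasurableSpace X] [MeasurableSpace Y] {μ : Measure X} {ν : Measure Y}
  [SigmaFinite μ] [SigmaFinite ν]

theorem integral_integral_swap_of_nonneg {f : X → Y → ℝ}
    (hf : AEStronglyMeasurable (Function.uncurry f) (μ.prod ν))
    (hf_nonneg : ∀ᵐ x ∂μ, ∀ᵐ y ∂ν, 0 ≤ f x y) (hf_fiber : ∀ᵐ x ∂μ, Integrable (f x) ν)
    (hf_int : Integrable (fun x ↦ ∫ y, f x y ∂ν) μ) :
    ∫ x, ∫ y, f x y ∂ν ∂μ = ∫ y, ∫ x, f x y ∂μ ∂ν := by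
  refine integral_integral_swap ((integrable_prod_iff hf).2 ⟨hf_fiber, hf_int.congr ?_⟩)
  filter_upwards [hf_nonneg] with x hx
  exact integral_congr_ae (hx.mono fun y hy ↦ (Real.norm_of_nonneg hy).symm)

end Tonelli

theorem integrableOn_Ioi_of_norm_le_rpow {E : Type*} [NormedAddCommGroup E] {f : ℝ → E}
    (hf : AEStronglyMeasurable f (volume.restrict (Ioi 0))) {p q C₀ C₁ : ℝ}
    (hp : -1 < p) (hq : q < -1) (h₀ : ∀ v ∈ Ioc 0 1, ‖f v‖ ≤ C₀ * v ^ p)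
    (h₁ : ∀ v ∈ Ioi 1, ‖f v‖ ≤ C₁ * v ^ q) :
    IntegrableOn f (Ioi 0) := by
  rw [← Ioc_union_Ioi_eq_Ioi zero_le_one]
  refine IntegrableOn.union ?_ ?_
  · refine Integrable.mono' ?_ (hf.mono_measure (Measure.restrict_mono Ioc_subset_Ioi_self le_rfl))
      ((ae_restrict_iff' measurableSet_Ioc).2 (.of_forall h₀))
    exact ((intervalIntegral.intervalIntegrable_rpow' hp).const_mul C₀).1
  · refine Integrable.mono' ((integrableOn_Ioi_rpow_of_lt hq one_pos).const_mul C₁)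
      (hf.mono_measure (Measure.restrict_mono (Ioi_subset_Ioi zero_le_one) le_rfl))
      ((ae_restrict_iff' measurableSet_Ioi).2 (.of_forall h₁))

theorem integral_comp_mul_left_Ioi_div_rpow (g : ℝ → ℝ) (s : ℝ) {b : ℝ} (hb : 0 < b) :
    ∫ v in Ioi 0, g (b * v) / v ^ s = b ^ (s - 1) * ∫ v in Ioi 0, g v / v ^ s := by
  have hscale : ∀ v ∈ Ioi (0 : ℝ), g (b * v) / v ^ s = b ^ s * (g (b * v) / (b * v) ^ s) := by
    intro v (hv : 0 < v)
    rw [mul_rpow hb.le hv.le]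
    field_simp
  rw [setIntegral_congr_fun measurableSet_Ioi hscale, integral_const_mul,
    integral_comp_mul_left_Ioi (fun w ↦ g w / w ^ s) 0 hb, mul_zero, smul_eq_mul, ← mul_assoc,
    rpow_sub_one hb.ne', div_eq_mul_inv]

section Laplace

variable {t : ℝ}

theorem integrableOn_exp_neg_mul_Ioi (ht : 0 < t) :
    IntegrableOn (fun v ↦ exp (-(t * v))) (Ioi 0) := by
  simpa using exp_neg_integrableOn_Ioi 0 ht

theorem integral_exp_neg_mul_Ioi (ht : 0 < t) : ∫ v in Ioi 0, exp (-(t * v)) = t⁻¹ := by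
  simpa using integral_exp_mul_Ioi (neg_neg_of_pos ht) 0

theorem integrableOn_cos_mul_exp_neg_mul (ht : 0 < t) :
    IntegrableOn (fun v ↦ cos v * exp (-(t * v))) (Ioi 0) := by
  refine Integrable.mono' (integrableOn_exp_neg_mul_Ioi ht) (by fun_prop) (.of_forall fun v ↦ ?_)
  rw [norm_mul, Real.norm_of_nonneg (exp_pos _).le]
  exact mul_le_of_le_one_left (exp_pos _).le (abs_cos_le_one v)

theorem integrableOn_one_sub_cos_mul_exp_neg_mul (ht : 0 < t) :
    IntegrableOn (fun v ↦ (1 - cos v) * exp (-(t * v))) (Ioi 0) := by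
  simp_rw [sub_mul, one_mul]
  exact (integrableOn_exp_neg_mul_Ioi ht).sub (integrableOn_cos_mul_exp_neg_mul ht)

theorem integral_cos_mul_exp_neg_mul (ht : 0 < t) :
    ∫ v in Ioi 0, cos v * exp (-(t * v)) = t / (t ^ 2 + 1) := by
  have hre : (-t + Complex.I).re < 0 := by simpa using ht
  have hcos : ∀ v : ℝ,
      cos v * exp (-(t * v)) = RCLike.re (Complex.exp ((-t + Complex.I) * v)) := fun v ↦ by
    simp [Complex.exp_re, mul_comm]
  simp_rw [hcos]
  rw [integral_re (integrableOn_exp_mul_complex_Ioi hre 0), integral_exp_mul_complex_Ioi hre 0]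
  simp [Complex.div_re, Complex.normSq, field]

theorem integral_one_sub_cos_mul_exp_neg_mul (ht : 0 < t) :
    ∫ v in Ioi 0, (1 - cos v) * exp (-(t * v)) = (t * (t ^ 2 + 1))⁻¹ := by
  simp_rw [sub_mul, one_mul]
  rw [integral_sub (integrableOn_exp_neg_mul_Ioi ht) (integrableOn_cos_mul_exp_neg_mul ht),
    integral_exp_neg_mul_Ioi ht, integral_cos_mul_exp_neg_mul ht]
  field_simp
  ring

end Laplace

section

variable {α : ℝ}

theorem integrableOn_one_sub_cos_mul_div_rpow (hα₀ : 0 < α) (hα₂ : α < 2) (b : ℝ) :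
    IntegrableOn (fun v ↦ (1 - cos (b * v)) / v ^ (1 + α)) (Ioi 0) := by
  refine integrableOn_Ioi_of_norm_le_rpow (by fun_prop : Measurable _).aestronglyMeasurable
    (p := 1 - α) (q := -(1 + α)) (C₀ := b ^ 2 / 2) (C₁ := 2) (by linarith) (by linarith) (fun v hv ↦ ?_) (fun v hv ↦ ?_)
  · have hv₀ : 0 < v := hv.1
    rw [Real.norm_of_nonneg (div_nonneg (sub_nonneg.2 (cos_le_one _)) (by positivity)),
      show 1 - α = 2 - (1 + α) by ring, rpow_sub hv₀, rpow_two, ← mul_div_assoc]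
    gcongr
    linarith [one_sub_sq_div_two_le_cos (x := b * v)]
  · have hv₀ : 0 < v := zero_lt_one.trans hv
    rw [Real.norm_of_nonneg (div_nonneg (sub_nonneg.2 (cos_le_one _)) (by positivity)),
      rpow_neg hv₀.le, ← div_eq_mul_inv]
    gcongr
    linarith [neg_one_le_cos (b * v)]

theorem integrableOn_rpow_div_one_add_sq (hα₀ : 0 < α) (hα₂ : α < 2) :
    IntegrableOn (fun t : ℝ ↦ t ^ (α - 1) / (1 + t ^ 2)) (Ioi 0) := by
  refine integrableOn_Ioi_of_norm_le_rpow (by fun_prop : Measurable _).aestronglyMeasurable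
    (p := α - 1) (q := α - 3) (C₀ := 1) (C₁ := 1) (by linarith) (by linarith) (fun t ht ↦ ?_) (fun t ht ↦ ?_)
  · have ht₀ : 0 < t := ht.1
    rw [Real.norm_of_nonneg (by positivity), one_mul]
    exact div_le_self (by positivity) (by nlinarith)
  · have ht₀ : 0 < t := zero_lt_one.trans ht
    rw [Real.norm_of_nonneg (by positivity), one_mul, show α - 3 = α - 1 - 2 by ring,
      rpow_sub ht₀ (α - 1) 2, rpow_two]
    gcongr
    linarith

theorem integral_rpow_div_one_add_sq (hα₀ : 0 < α) (hα₂ : α < 2) :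
    ∫ t in Ioi 0, t ^ (α - 1) / (1 + t ^ 2) = π / (2 * sin (π * α / 2)) := by
  set f : ℝ → ℝ → ℝ := fun t u ↦ t ^ (α - 1) * exp (-((1 + t ^ 2) * u))
  have hpos : ∀ t : ℝ, 0 < 1 + t ^ 2 := fun t ↦ by positivity
  have hf_fiber : ∀ t, IntegrableOn (f t) (Ioi 0) := fun t ↦
    (integrableOn_exp_neg_mul_Ioi (hpos t)).const_mul _
  have hf_u : ∀ t, ∫ u in Ioi 0, f t u = t ^ (α - 1) / (1 + t ^ 2) := fun t ↦ by
    rw [integral_const_mul, integral_exp_neg_mul_Ioi (hpos t), div_eq_mul_inv]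
  have hf_t : ∀ u ∈ Ioi (0 : ℝ),
      ∫ t in Ioi 0, f t u = Gamma (α / 2) / 2 * (exp (-u) * u ^ (1 - α / 2 - 1)) := by
    intro u hu
    have hsplit : ∀ t, f t u = exp (-u) * (t ^ (α - 1) * exp (-u * t ^ (2 : ℝ))) := fun t ↦ by
      simp only [f]
      rw [rpow_two, mul_left_comm, ← exp_add]
      ring_nf
    simp_rw [hsplit]
    rw [integral_const_mul, integral_rpow_mul_exp_neg_mul_rpow two_pos (by linarith) hu]
    ring_nf
  have hswap : ∫ t in Ioi 0, ∫ u in Ioi 0, f t u = ∫ u in Ioi 0, ∫ t in Ioi 0, f t u := by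
    refine integral_integral_swap_of_nonneg (by fun_prop : Measurable _).aestronglyMeasurable ?_
      (.of_forall hf_fiber) ((integrableOn_rpow_div_one_add_sq hα₀ hα₂).congr_fun
        (fun t _ ↦ (hf_u t).symm) measurableSet_Ioi)
    filter_upwards [ae_restrict_mem measurableSet_Ioi] with t (ht : 0 < t)
    exact .of_forall fun u ↦ by positivity
  calc ∫ t in Ioi 0, t ^ (α - 1) / (1 + t ^ 2) = ∫ t in Ioi 0, ∫ u in Ioi 0, f t u := by
        simp_rw [hf_u]
    _ = Gamma (α / 2) / 2 * Gamma (1 - α / 2) := by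
        rw [hswap, setIntegral_congr_fun measurableSet_Ioi hf_t, integral_const_mul,
          Gamma_eq_integral (by linarith : 0 < 1 - α / 2)]
    _ = π / (2 * sin (π * α / 2)) := by
        rw [div_mul_eq_mul_div, Gamma_mul_Gamma_one_sub, div_div, mul_comm 2, ← mul_div_assoc]

theorem integral_one_sub_cos_div_rpow (hα₀ : 0 < α) (hα₂ : α < 2) :
    ∫ v in Ioi 0, (1 - cos v) / v ^ (1 + α) = π / (2 * Gamma (1 + α) * sin (π * α / 2)) := by
  set f : ℝ → ℝ → ℝ := fun t v ↦ t ^ α * ((1 - cos v) * exp (-(t * v)))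
  have hΓ : Gamma (1 + α) ≠ 0 := (Gamma_pos_of_pos (by linarith)).ne'
  have hf_v : ∀ t ∈ Ioi (0 : ℝ), ∫ v in Ioi 0, f t v = t ^ (α - 1) / (1 + t ^ 2) := by
    intro t (ht : 0 < t)
    rw [integral_const_mul, integral_one_sub_cos_mul_exp_neg_mul ht, rpow_sub_one ht.ne']
    field_simp
    ring
  have hf_t : ∀ v ∈ Ioi (0 : ℝ),
      ∫ t in Ioi 0, f t v = Gamma (1 + α) * ((1 - cos v) / v ^ (1 + α)) := by
    intro v (hv : 0 < v)
    have hsplit : ∀ t, f t v = (1 - cos v) * (t ^ (1 + α - 1) * exp (-(v * t))) := fun t ↦ by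
      simp only [f, add_sub_cancel_left, mul_comm t v]
      ring
    simp_rw [hsplit]
    rw [integral_const_mul, integral_rpow_mul_exp_neg_mul_Ioi (by linarith) hv, one_div,
      inv_rpow hv.le, div_eq_mul_inv]
    ring
  have hswap : ∫ t in Ioi 0, ∫ v in Ioi 0, f t v = ∫ v in Ioi 0, ∫ t in Ioi 0, f t v := by
    refine integral_integral_swap_of_nonneg (by fun_prop : Measurable _).aestronglyMeasurable ?_ ?_
      ((integrableOn_rpow_div_one_add_sq hα₀ hα₂).congr_fun
        (fun t ht ↦ (hf_v t ht).symm) measurableSet_Ioi)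
    · filter_upwards [ae_restrict_mem measurableSet_Ioi] with t (ht : 0 < t)
      exact .of_forall fun v ↦ mul_nonneg (by positivity)
        (mul_nonneg (sub_nonneg.2 (cos_le_one v)) (exp_pos _).le)
    · filter_upwards [ae_restrict_mem measurableSet_Ioi] with t (ht : 0 < t)
      exact (integrableOn_one_sub_cos_mul_exp_neg_mul ht).const_mul _
  calc ∫ v in Ioi 0, (1 - cos v) / v ^ (1 + α)
      = (Gamma (1 + α))⁻¹ * ∫ v in Ioi 0, ∫ t in Ioi 0, f t v := by
        rw [setIntegral_congr_fun measurableSet_Ioi hf_t, integral_const_mul,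
          inv_mul_cancel_left₀ hΓ]
    _ = (Gamma (1 + α))⁻¹ * ∫ t in Ioi 0, t ^ (α - 1) / (1 + t ^ 2) := by
        rw [← hswap, setIntegral_congr_fun measurableSet_Ioi hf_v]
    _ = π / (2 * Gamma (1 + α) * sin (π * α / 2)) := by
        rw [integral_rpow_div_one_add_sq hα₀ hα₂]
        ring

theorem integral_one_sub_cos_mul_div_rpow (hα₀ : 0 < α) (hα₂ : α < 2) (b : ℝ) :
    ∫ v in Ioi 0, (1 - cos (b * v)) / v ^ (1 + α) =
      |b| ^ α * (π / (2 * Gamma (1 + α) * sin (π * α / 2))) := by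
  rw [← integral_one_sub_cos_div_rpow hα₀ hα₂]
  have hcos : ∀ v, cos (b * v) = cos (|b| * v) := fun v ↦ by
    rcases abs_choice b with h | h <;> simp [h]
  simp_rw [hcos]
  rcases (abs_nonneg b).eq_or_lt with hb | hb
  · simp [← hb, zero_rpow hα₀.ne']
  · rw [integral_comp_mul_left_Ioi_div_rpow (fun v ↦ 1 - cos v) _ hb, add_sub_cancel_left]

theorem integral_sin_mul_sin_div_rpow_eq (hα₀ : 0 < α) (hα₂ : α < 2) (k : ℝ) :
    ∫ v in Ioi 0, sin (k * v) * sin v / v ^ (1 + α) =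
      π / 4 * (|k + 1| ^ α - |k - 1| ^ α) / (Gamma (1 + α) * sin (π * α / 2)) := by
  have hprod : ∀ v, sin (k * v) * sin v / v ^ (1 + α) =
      ((1 - cos ((k + 1) * v)) / v ^ (1 + α) - (1 - cos ((k - 1) * v)) / v ^ (1 + α)) / 2 :=
    fun v ↦ by
      rw [add_mul, sub_mul, one_mul, cos_add, cos_sub]
      ring
  simp_rw [hprod]
  rw [integral_div, integral_sub (integrableOn_one_sub_cos_mul_div_rpow hα₀ hα₂ _)
    (integrableOn_one_sub_cos_mul_div_rpow hα₀ hα₂ _), integral_one_sub_cos_mul_div_rpow hα₀ hα₂,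
    integral_one_sub_cos_mul_div_rpow hα₀ hα₂]
  ring

end

theorem isBigO_rpow_add_one_sub_rpow_sub_one (α : ℝ) :
    (fun k : ℝ ↦ (k + 1) ^ α - (k - 1) ^ α) =O[atTop] fun k ↦ k ^ (α - 1) := by
  set g : ℝ → ℝ := fun h ↦ (1 + h) ^ α - (1 - h) ^ α
  have hg : g =O[𝓝 0] fun h ↦ h := by
    have hdiff : DifferentiableAt ℝ g 0 := by
      fun_prop (disch := norm_num)
    simpa [g] using hdiff.isBigO_sub
  have hscaled : (fun k : ℝ ↦ k ^ α * g k⁻¹) =O[atTop] fun k ↦ k ^ α * k⁻¹ :=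
    (isBigO_refl _ _).mul (hg.comp_tendsto tendsto_inv_atTop_zero)
  refine hscaled.congr' ?_ ?_
  · filter_upwards [eventually_ge_atTop 1] with k hk
    have hk₀ : 0 < k := one_pos.trans_le hk
    have hk₁ : 0 ≤ 1 - k⁻¹ := sub_nonneg.2 (inv_le_one_of_one_le₀ hk)
    rw [mul_sub, ← mul_rpow hk₀.le (by positivity), ← mul_rpow hk₀.le hk₁, mul_add, mul_sub,
      mul_one, mul_inv_cancel₀ hk₀.ne']
  · filter_upwards [eventually_gt_atTop 0] with k hk
    rw [rpow_sub_one hk.ne', div_eq_mul_inv]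

/-- For `α ∈ (0,2)` and `k > 0`,
`∫_0^∞ sin(kv) sin v · v^{−1−α} dv = (π/4)(|k+1|^α − |k−1|^α)/(Γ(1+α) sin(πα/2))`,
and this integral is `O(k^{α−1})` as `k → ∞`. -/
theorem integral_sin_mul_sin_div_rpow (α : ℝ) (hα : α ∈ Set.Ioo (0 : ℝ) 2) :
    (∀ k : ℝ, 0 < k →
      ∫ v in Ioi (0 : ℝ), Real.sin (k * v) * Real.sin v / v ^ (1 + α) =
        π / 4 * (|k + 1| ^ α - |k - 1| ^ α) / (Real.Gamma (1 + α) * Real.sin (π * α / 2))) ∧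
    (fun k : ℝ => ∫ v in Ioi (0 : ℝ), Real.sin (k * v) * Real.sin v / v ^ (1 + α))
      =O[atTop] fun k : ℝ => k ^ (α - 1) := by
  obtain ⟨hα₀, hα₂⟩ := hα
  refine ⟨fun k _ ↦ integral_sin_mul_sin_div_rpow_eq hα₀ hα₂ k, ?_⟩
  refine ((isBigO_rpow_add_one_sub_rpow_sub_one α).const_mul_left
    (π / 4 / (Gamma (1 + α) * sin (π * α / 2)))).congr' ?_ .rfl
  filter_upwards [eventually_ge_atTop 1] with k hk
  rw [integral_sin_mul_sin_div_rpow_eq hα₀ hα₂, abs_of_nonneg (by linarith),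
    abs_of_nonneg (by linarith)]
  ring
end

section
/- For every α ∈ (0,2) there is a constant C > 0 such that for all z ∈ ℝ and all k ≥ 1, | ∫_ℝ (1−cos(zu))·cos(ku)·|u|^{−1−α} du | ≤ C·z²·k^{α−2}. In particular, with k = n^{1/α}, the bound is C·z²·n^{−(2−α)/α}. -/
open MeasureTheory Real Set

/-!
Since `(1 - cos x) cos y = (1 - cos (x + y))/2 + (1 - cos (x - y))/2 - (1 - cos y)` and, by
scaling, `∫ (1 - cos (a u)) |u|^(-1-α) du = c_α |a|^α`, the integral equals `c_α` times the
second difference `(|k + z|^α + |k - z|^α)/2 - k^α` of `f t = |t|^α` at `k`. For `|z| ≤ k/2`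
the mean value theorem, applied twice, bounds it by `sup |f''| z² ≲ z² k^(α-2)`; for
`|z| > k/2` every term is `≲ |z|^α`, and `|z|^α = z² |z|^(α-2) ≲ z² k^(α-2)` as `α < 2`.
-/

noncomputable def stableIntegrand (α a u : ℝ) : ℝ := (1 - cos (a * u)) / |u| ^ (1 + α)

namespace stableIntegrand

variable {α : ℝ}

lemma nonneg (α a u : ℝ) : 0 ≤ stableIntegrand α a u :=
  div_nonneg (sub_nonneg.2 (cos_le_one _)) (rpow_nonneg (abs_nonneg u) _)

lemma apply_neg (α a u : ℝ) : stableIntegrand α a (-u) = stableIntegrand α a u := by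
  simp only [stableIntegrand, mul_neg, cos_neg, abs_neg]

lemma le_sq_mul_rpow {u : ℝ} (hu : 0 < u) (a : ℝ) :
    stableIntegrand α a u ≤ a ^ 2 * u ^ (1 - α) := by
  rw [stableIntegrand, abs_of_pos hu, div_le_iff₀ (rpow_pos_of_pos hu _), mul_assoc,
    ← rpow_add hu, show 1 - α + (1 + α) = (2 : ℕ) by norm_num, rpow_natCast]
  nlinarith [one_sub_sq_div_two_le_cos (x := a * u), sq_nonneg (a * u)]

lemma le_two_mul_rpow {u : ℝ} (hu : 0 < u) (a : ℝ) :
    stableIntegrand α a u ≤ 2 * u ^ (-(1 + α)) := by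
  rw [stableIntegrand, abs_of_pos hu, rpow_neg hu.le, ← div_eq_mul_inv]
  gcongr
  linarith [neg_one_le_cos (a * u)]

lemma integrableOn_Ioi (h0 : 0 < α) (h2 : α < 2) (a : ℝ) :
    IntegrableOn (stableIntegrand α a) (Ioi 0) := by
  have hmeas : AEStronglyMeasurable (stableIntegrand α a) :=
    (by unfold stableIntegrand; fun_prop : Measurable (stableIntegrand α a)).aestronglyMeasurable
  rw [← Ioc_union_Ioi_eq_Ioi zero_le_one, integrableOn_union]
  constructor
  · have hdom : IntegrableOn (fun u : ℝ => a ^ 2 * u ^ (1 - α)) (Ioc 0 1) := by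
      refine Integrable.const_mul ?_ _
      exact (intervalIntegrable_iff_integrableOn_Ioc_of_le zero_le_one).1
        (intervalIntegral.intervalIntegrable_rpow' (by linarith))
    refine hdom.mono' hmeas.restrict ?_
    filter_upwards [ae_restrict_mem measurableSet_Ioc] with u hu
    rw [norm_of_nonneg (nonneg α a u)]
    exact le_sq_mul_rpow hu.1 a
  · have hdom : IntegrableOn (fun u : ℝ => 2 * u ^ (-(1 + α))) (Ioi 1) :=
      (integrableOn_Ioi_rpow_of_lt (by linarith) one_pos).const_mul 2
    refine hdom.mono' hmeas.restrict ?_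
    filter_upwards [ae_restrict_mem measurableSet_Ioi] with u hu
    rw [norm_of_nonneg (nonneg α a u)]
    exact le_two_mul_rpow (one_pos.trans hu) a

lemma integrable (h0 : 0 < α) (h2 : α < 2) (a : ℝ) : Integrable (stableIntegrand α a) := by
  rw [← integrableOn_univ, ← Iio_union_Ici (a := 0), integrableOn_union,
    integrableOn_Ici_iff_integrableOn_Ioi]
  refine ⟨?_, integrableOn_Ioi h0 h2 a⟩
  rw [← (Measure.measurePreserving_neg volume).integrableOn_comp_preimage
    (Homeomorph.neg ℝ).measurableEmbedding]
  simpa [Function.comp_def, apply_neg] using integrableOn_Ioi h0 h2 a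

lemma integral_eq (h0 : 0 < α) (a : ℝ) :
    ∫ u, stableIntegrand α a u = |a| ^ α * ∫ u, stableIntegrand α 1 u := by
  rcases eq_or_ne a 0 with rfl | ha
  · simp [stableIntegrand, zero_rpow h0.ne']
  have hA : 0 < |a| := abs_pos.2 ha
  have hscale : ∀ u, stableIntegrand α a u = |a| ^ (1 + α) * stableIntegrand α 1 (a * u) := by
    intro u
    rcases eq_or_ne u 0 with rfl | hu
    · simp [stableIntegrand]
    simp only [stableIntegrand, one_mul, abs_mul, mul_rpow (abs_nonneg a) (abs_nonneg u)]
    field_simp [(rpow_pos_of_pos hA (1 + α)).ne']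
  simp_rw [hscale]
  rw [integral_const_mul, Measure.integral_comp_mul_left, smul_eq_mul, abs_inv,
    rpow_add hA, rpow_one]
  field_simp

end stableIntegrand

lemma one_sub_cos_mul_cos (x y : ℝ) :
    (1 - cos x) * cos y = (1 - cos (x + y)) / 2 + (1 - cos (x - y)) / 2 - (1 - cos y) := by
  rw [cos_add, cos_sub]; ring

lemma integral_one_sub_cos_mul_cos_div {α : ℝ} (h0 : 0 < α) (h2 : α < 2) (z k : ℝ) :
    ∫ u, (1 - cos (z * u)) * cos (k * u) / |u| ^ (1 + α) =
      (|z + k| ^ α / 2 + |z - k| ^ α / 2 - |k| ^ α) * ∫ u, stableIntegrand α 1 u := by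
  have hsplit : ∀ u, (1 - cos (z * u)) * cos (k * u) / |u| ^ (1 + α) =
      (stableIntegrand α (z + k) u + stableIntegrand α (z - k) u) / 2 -
        stableIntegrand α k u := by
    intro u
    rw [one_sub_cos_mul_cos]
    simp only [stableIntegrand, add_mul, sub_mul]
    ring
  have hint := stableIntegrand.integrable h0 h2
  simp_rw [hsplit]
  rw [integral_sub (f := fun u => (stableIntegrand α (z + k) u + stableIntegrand α (z - k) u) / 2)
    (((hint _).add (hint _)).div_const 2) (hint k), integral_div, integral_add (hint _) (hint _),
    stableIntegrand.integral_eq h0 (z + k), stableIntegrand.integral_eq h0 (z - k),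
    stableIntegrand.integral_eq h0 k]
  ring

lemma abs_secondDiff_le_of_hasDerivAt {f f' f'' : ℝ → ℝ} {a w M : ℝ} (hw : 0 ≤ w)
    (hf : ∀ x ∈ Icc (a - w) (a + w), HasDerivAt f (f' x) x)
    (hf' : ∀ x ∈ Icc (a - w) (a + w), HasDerivAt f' (f'' x) x)
    (hM : ∀ x ∈ Icc (a - w) (a + w), |f'' x| ≤ M) :
    |f (a + w) + f (a - w) - 2 * f a| ≤ 2 * M * w ^ 2 := by
  have hM0 : 0 ≤ M := (abs_nonneg _).trans (hM a ⟨by linarith, by linarith⟩)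
  have hmem : ∀ t ∈ Icc 0 w, a + t ∈ Icc (a - w) (a + w) ∧ a - t ∈ Icc (a - w) (a + w) :=
    fun t ht => ⟨⟨by linarith [ht.1], by linarith [ht.2]⟩,
      ⟨by linarith [ht.2], by linarith [ht.1]⟩⟩
  have hf'_diff : ∀ t ∈ Icc 0 w, ‖f' (a + t) - f' (a - t)‖ ≤ M * (2 * w) := by
    intro t ht
    calc ‖f' (a + t) - f' (a - t)‖ ≤ M * ‖a + t - (a - t)‖ :=
          (convex_Icc _ _).norm_image_sub_le_of_norm_hasDerivWithin_le
            (fun x hx => (hf' x hx).hasDerivWithinAt) hM (hmem t ht).2 (hmem t ht).1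
      _ ≤ M * (2 * w) := by
          rw [Real.norm_eq_abs, abs_of_nonneg (by linarith [ht.1])]
          exact mul_le_mul_of_nonneg_left (by linarith [ht.2]) hM0
  have hG : ∀ t ∈ Icc 0 w, HasDerivWithinAt (fun t => f (a + t) + f (a - t))
      (f' (a + t) - f' (a - t)) (Icc 0 w) t := by
    intro t ht
    have hr := (hf _ (hmem t ht).1).comp t ((hasDerivAt_id t).const_add a)
    have hl := (hf _ (hmem t ht).2).comp t ((hasDerivAt_id t).const_sub a)
    exact ((hr.add hl).congr_deriv (by simp; ring)).hasDerivWithinAt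
  have := (convex_Icc 0 w).norm_image_sub_le_of_norm_hasDerivWithin_le hG hf'_diff
    (left_mem_Icc.2 hw) (right_mem_Icc.2 hw)
  simp only [add_zero, sub_zero, Real.norm_eq_abs, abs_of_nonneg hw] at this
  calc |f (a + w) + f (a - w) - 2 * f a| = |f (a + w) + f (a - w) - (f a + f a)| := by ring_nf
    _ ≤ 2 * M * w ^ 2 := by nlinarith

lemma div_two_rpow_le {k β : ℝ} (hk : 0 ≤ k) (hβ : -2 ≤ β) :
    (k / 2) ^ β ≤ 4 * k ^ β := by
  rw [div_rpow hk zero_le_two, div_eq_mul_inv, ← rpow_neg zero_le_two, mul_comm]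
  gcongr
  calc (2:ℝ) ^ (-β) ≤ 2 ^ (2:ℝ) := rpow_le_rpow_of_exponent_le one_le_two (by linarith)
    _ = 4 := by norm_num

section SecondDifference

variable {α k : ℝ}

lemma abs_secondDiff_rpow_le_of_le_half (h0 : 0 < α) (h2 : α < 2) (hk : 0 < k) {z : ℝ}
    (hz : 0 ≤ z) (hzk : z ≤ k / 2) :
    |(k + z) ^ α / 2 + (k - z) ^ α / 2 - k ^ α| ≤ 8 * z ^ 2 * k ^ (α - 2) := by
  have hpos : ∀ x ∈ Icc (k - z) (k + z), k / 2 ≤ x := fun x hx => by linarith [hx.1]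
  have key := abs_secondDiff_le_of_hasDerivAt (f := fun x => x ^ α)
    (f' := fun x => α * x ^ (α - 1)) (f'' := fun x => α * ((α - 1) * x ^ (α - 2)))
    (M := 2 * (4 * k ^ (α - 2))) hz
    (fun x hx => hasDerivAt_rpow_const (p := α) (x := x) (Or.inl (by linarith [hpos x hx])))
    (fun x hx => by
      have := (hasDerivAt_rpow_const (p := α - 1) (x := x)
        (Or.inl (by linarith [hpos x hx]))).const_mul α
      rwa [sub_sub, one_add_one_eq_two] at this)
    (fun x hx => by
      have hx0 : 0 < k / 2 := by linarith
      rw [abs_mul, abs_mul, abs_of_pos h0,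
        abs_of_pos (rpow_pos_of_pos (hx0.trans_le (hpos x hx)) _)]
      have hα1 : |α - 1| ≤ 1 := abs_le.2 ⟨by linarith, by linarith⟩
      have hxk : x ^ (α - 2) ≤ 4 * k ^ (α - 2) :=
        (rpow_le_rpow_of_nonpos hx0 (hpos x hx) (by linarith)).trans
          (div_two_rpow_le hk.le (by linarith))
      have : |α - 1| * x ^ (α - 2) ≤ 1 * (4 * k ^ (α - 2)) :=
        mul_le_mul hα1 hxk (rpow_nonneg (hx0.le.trans (hpos x hx)) _) zero_le_one
      nlinarith [mul_le_mul_of_nonneg_left this h0.le, rpow_nonneg hk.le (α - 2)])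
  calc |(k + z) ^ α / 2 + (k - z) ^ α / 2 - k ^ α|
      = |(k + z) ^ α + (k - z) ^ α - 2 * k ^ α| / 2 := by
        rw [← abs_two, ← abs_div, abs_two]; ring_nf
    _ ≤ 8 * z ^ 2 * k ^ (α - 2) := by linarith

lemma abs_secondDiff_rpow_le_of_half_lt (h0 : 0 < α) (h2 : α < 2) (hk : 0 < k) {z : ℝ}
    (hzk : k / 2 < z) :
    |(|z + k| ^ α / 2 + |z - k| ^ α / 2 - k ^ α)| ≤ 36 * z ^ 2 * k ^ (α - 2) := by
  have hz : 0 < z := by linarith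
  have hle : ∀ p, 0 ≤ p → p ≤ 3 * z → p ^ α ≤ 9 * z ^ α := fun p hp hpz =>
    calc p ^ α ≤ (3 * z) ^ α := rpow_le_rpow hp hpz h0.le
      _ = 3 ^ α * z ^ α := mul_rpow (by norm_num) hz.le
      _ ≤ 3 ^ (2 : ℝ) * z ^ α := by gcongr; norm_num
      _ = 9 * z ^ α := by norm_num
  have h₁ := hle |z + k| (abs_nonneg _) (abs_le.2 ⟨by linarith, by linarith⟩)
  have h₂ := hle |z - k| (abs_nonneg _) (abs_le.2 ⟨by linarith, by linarith⟩)
  have h₃ := hle k hk.le (by linarith)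
  have hz_rpow : z ^ α ≤ 4 * z ^ 2 * k ^ (α - 2) :=
    calc z ^ α = z ^ 2 * z ^ (α - 2) := by
          rw [← rpow_natCast, ← rpow_add hz]; norm_num
      _ ≤ z ^ 2 * (4 * k ^ (α - 2)) := by
          gcongr
          exact (rpow_le_rpow_of_nonpos (by linarith) hzk.le (by linarith)).trans
            (div_two_rpow_le hk.le (by linarith))
      _ = 4 * z ^ 2 * k ^ (α - 2) := by ring
  have := rpow_nonneg (abs_nonneg (z + k)) α
  have := rpow_nonneg (abs_nonneg (z - k)) α
  have := rpow_nonneg hk.le α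
  rw [abs_le]; constructor <;> nlinarith

lemma abs_secondDiff_abs_rpow_le (h0 : 0 < α) (h2 : α < 2) (hk : 0 < k) (z : ℝ) :
    |(|z + k| ^ α / 2 + |z - k| ^ α / 2 - |k| ^ α)| ≤ 36 * z ^ 2 * k ^ (α - 2) := by
  wlog hz : 0 ≤ z generalizing z
  · have h₁ : |-z + k| = |z - k| := by rw [← abs_neg]; congr 1; ring
    have h₂ : |-z - k| = |z + k| := by rw [← abs_neg]; congr 1; ring
    have := this (-z) (by linarith)
    rwa [h₁, h₂, neg_sq, add_comm (|z - k| ^ α / 2)] at this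
  rw [abs_of_pos hk]
  rcases le_or_gt z (k / 2) with hzk | hzk
  · rw [abs_of_nonneg (by linarith : 0 ≤ z + k), abs_sub_comm z k,
      abs_of_nonneg (by linarith : 0 ≤ k - z), add_comm z]
    have := abs_secondDiff_rpow_le_of_le_half h0 h2 hk hz hzk
    nlinarith [mul_nonneg (sq_nonneg z) (rpow_nonneg hk.le (α - 2))]
  · exact abs_secondDiff_rpow_le_of_half_lt h0 h2 hk hzk

end SecondDifference

/-- For every `α ∈ (0,2)` there is `C > 0` such that for all real `z` and `k ≥ 1`,
`|∫ (1−cos(zu)) cos(ku) |u|^{−1−α} du| ≤ C z² k^{α−2}`; in particular with `k = n^{1/α}`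
the bound is `C z² n^{−(2−α)/α}`. -/
theorem cos_perturbation_bound (α : ℝ) (hα : α ∈ Set.Ioo (0 : ℝ) 2) :
    ∃ C > 0,
      (∀ z k : ℝ, 1 ≤ k →
        |∫ u : ℝ, (1 - Real.cos (z * u)) * Real.cos (k * u) / |u| ^ (1 + α)| ≤
          C * z ^ 2 * k ^ (α - 2)) ∧
      ∀ (z : ℝ) (n : ℕ), 1 ≤ n →
        |∫ u : ℝ, (1 - Real.cos (z * u)) * Real.cos ((n : ℝ) ^ (1 / α) * u) / |u| ^ (1 + α)| ≤
          C * z ^ 2 * (n : ℝ) ^ (-(2 - α) / α) := by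
  obtain ⟨h0, h2⟩ := hα
  set c := ∫ u, stableIntegrand α 1 u
  have hc : 0 ≤ c := integral_nonneg (stableIntegrand.nonneg α 1)
  have hbound : ∀ z k : ℝ, 1 ≤ k →
      |∫ u : ℝ, (1 - cos (z * u)) * cos (k * u) / |u| ^ (1 + α)| ≤
        (36 * c + 1) * z ^ 2 * k ^ (α - 2) := by
    intro z k hk
    have hk0 : 0 < k := one_pos.trans_le hk
    rw [integral_one_sub_cos_mul_cos_div h0 h2, abs_mul, abs_of_nonneg hc]
    have := abs_secondDiff_abs_rpow_le h0 h2 hk0 z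
    nlinarith [mul_nonneg (sq_nonneg z) (rpow_nonneg hk0.le (α - 2))]
  refine ⟨36 * c + 1, by positivity, hbound, fun z n hn => ?_⟩
  have hk : 1 ≤ (n : ℝ) ^ (1 / α) := one_le_rpow (by exact_mod_cast hn) (by positivity)
  have := hbound z _ hk
  rwa [← rpow_mul n.cast_nonneg,
    show 1 / α * (α - 2) = -(2 - α) / α by field_simp; ring] at this
end
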